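/- Let λ₁λ₂ > 0, Q(u) = (λ₁u₁² + λ₂u₂²)/2, X(u) = (u₁,u₂,Q(u)), and let U ⊂ ℝ² be open with the closed ball B̄(0,r₀) ⊆ U for some r₀ > 0. Set S_Q = X(U) and μ_Q = χ·H²⌊S_Q, where χ : ℝ³ → [0,∞) is bounded and satisfies χ ≥ c_χ > 0 on X(B̄(0,r₀)). For ρ ∈ (0,1] define the extreme strip E^ext_{e₁} := {X(u) : u ∈ U, |n_Q(u)·e₁| ≤ ρ^{1/2}}, where e₁ = (1,0,0). Then there exist ρ₀ ∈ (0,1] and c > 0, depending only on λ₁, λ₂, r₀, and c_χ, such that for every 0 < ρ ≤ ρ₀ there is a tube T_ρ of direction e₁, radius comparable to ρ, and length comparable to 1, with axis through the origin, satisfying μ_Q(S_Q ∩ T_ρ ∩ E^ext_{e₁}) ≥ c ρ^{3/2}. -/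

import Mathlib

noncomputable section
open MeasureTheory Metric Set Function
open scoped ENNReal RealInnerProductSpace

abbrev E3 : Type := EuclideanSpace ℝ (Fin 3)
abbrev E2 : Type := EuclideanSpace ℝ (Fin 2)

def mk3 (a b c : ℝ) : E3 := (WithLp.equiv 2 (Fin 3 → ℝ)).symm ![a, b, c]

/-- Quadratic graph parametrization `X(u) = (u₁, u₂, (l₁u₁² + l₂u₂²)/2)`. -/
def Xf (l₁ l₂ : ℝ) (u : E2) : E3 := mk3 (u 0) (u 1) ((l₁ * (u 0) ^ 2 + l₂ * (u 1) ^ 2) / 2)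

/-- Unit normal of the quadratic graph at `X(u)`. -/
def nQ (l₁ l₂ : ℝ) (u : E2) : E3 :=
  (Real.sqrt (1 + l₁ ^ 2 * (u 0) ^ 2 + l₂ ^ 2 * (u 1) ^ 2))⁻¹ •
    mk3 (-(l₁ * u 0)) (-(l₂ * u 1)) 1

/-- The tube `T(v, y₀, s₀, r, L)`. -/
def tube (v y₀ : E3) (s₀ r L : ℝ) : Set E3 :=
  {x | ‖x - ⟪x, v⟫ • v - y₀‖ ≤ r ∧ |⟪x, v⟫ - s₀| ≤ L}

/-- The surface measure `μ_Q = χ·H²⌊S_Q` of the quadratic patch `S_Q = X(U)`. -/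
def muQ (l₁ l₂ : ℝ) (U : Set E2) (χ : E3 → ℝ) : Measure E3 :=
  ((μH[2] : Measure E3).restrict (Xf l₁ l₂ '' U)).withDensity fun x => ENNReal.ofReal (χ x)

def e1 : E3 := mk3 1 0 0

/-!
On the parameter rectangle `R = {|u₁| ≤ δ√ρ, |u₂| ≤ δρ}` one has `|n_Q · e₁| ≤ |λ₁| |u₁| ≤ √ρ`,
and the height `Q(u)` is at most `δρ`, so `X(R)` lies in the extreme strip and in the tube of
radius `2δρ` around the `e₁`-axis. Projecting onto the first two coordinates is `1`-Lipschitz and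
inverts `X`, hence `H²(X(R)) ≥ |R| = 4δ²ρ^{3/2}`, and `χ ≥ c_χ` on `X(R)` because `R ⊆ B̄(0, r₀)`.
-/

theorem hausdorffMeasure_le_image_of_leftInverse {X Y : Type*} [EMetricSpace X] [EMetricSpace Y]
    [MeasurableSpace X] [BorelSpace X] [MeasurableSpace Y] [BorelSpace Y] {f : X → Y} {g : Y → X}
    (hg : LipschitzWith 1 g) (hgf : LeftInverse g f) {d : ℝ} (hd : 0 ≤ d) (s : Set X) :
    μH[d] s ≤ μH[d] (f '' s) := by
  simpa [hgf.image_image] using hg.hausdorffMeasure_image_le hd (f '' s)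

theorem volume_ofLp_image_le_hausdorffMeasure {ι : Type*} [Fintype ι]
    (s : Set (EuclideanSpace ℝ ι)) : volume (WithLp.ofLp '' s) ≤ μH[Fintype.card ι] s := by
  have h := (PiLp.lipschitzWith_ofLp 2 fun _ : ι => ℝ).hausdorffMeasure_image_le
    (Nat.cast_nonneg (Fintype.card ι)) s
  rwa [hausdorffMeasure_pi_real, ENNReal.coe_one, ENNReal.one_rpow, one_mul] at h

theorem ofReal_mul_le_withDensity_restrict {α : Type*} [MeasurableSpace α] (μ : Measure α)
    {S T : Set α} (hT : MeasurableSet T) (hTS : T ⊆ S) {f : α → ℝ} {c : ℝ}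
    (hf : ∀ x ∈ T, c ≤ f x) :
    ENNReal.ofReal c * μ T ≤ (μ.restrict S).withDensity (fun x => ENNReal.ofReal (f x)) T := by
  rw [withDensity_apply _ hT, Measure.restrict_restrict hT, inter_eq_left.mpr hTS,
    ← setLIntegral_const]
  exact setLIntegral_mono' hT fun x hx => ENNReal.ofReal_le_ofReal (hf x hx)

def rect (a b : ℝ) : Set E2 := {u | |u 0| ≤ a ∧ |u 1| ≤ b}

theorem isClosed_rect (a b : ℝ) : IsClosed (rect a b) := by
  have hcoord : ∀ i : Fin 2, Continuous fun u : E2 => u i := fun i =>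
    (continuous_apply i).comp (PiLp.continuous_ofLp 2 _)
  exact (isClosed_le (hcoord 0).abs continuous_const).inter
    (isClosed_le (hcoord 1).abs continuous_const)

theorem rect_subset_closedBall {a b r : ℝ} (hr : 0 ≤ r) (h : a ^ 2 + b ^ 2 ≤ r ^ 2) :
    rect a b ⊆ closedBall 0 r := by
  rintro u ⟨hu0, hu1⟩
  rw [mem_closedBall_zero_iff, EuclideanSpace.norm_eq, Fin.sum_univ_two, Real.sqrt_le_left hr]
  simp only [Real.norm_eq_abs, sq_abs]
  nlinarith [sq_le_sq' (neg_le_of_abs_le hu0) (le_of_abs_le hu0),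
    sq_le_sq' (neg_le_of_abs_le hu1) (le_of_abs_le hu1)]

theorem isCompact_rect {a b : ℝ} (ha : 0 ≤ a) (hb : 0 ≤ b) : IsCompact (rect a b) :=
  (isCompact_closedBall 0 (a + b)).of_isClosed_subset (isClosed_rect a b)
    (rect_subset_closedBall (by positivity) (by nlinarith))

theorem ofLp_image_rect (a b : ℝ) :
    WithLp.ofLp '' rect a b = univ.pi fun i => Icc (-![a, b] i) (![a, b] i) := by
  ext x
  simp only [rect, mem_univ_pi, Fin.forall_fin_two, mem_image, abs_le]
  constructor
  · rintro ⟨u, hu, rfl⟩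
    simpa using hu
  · intro hx
    exact ⟨WithLp.toLp 2 x, by simpa using hx, rfl⟩

theorem ofReal_le_hausdorffMeasure_rect {a : ℝ} (ha : 0 ≤ a) (b : ℝ) :
    ENNReal.ofReal (4 * a * b) ≤ μH[2] (rect a b) := by
  have hvol : volume (WithLp.ofLp '' rect a b) = ENNReal.ofReal (4 * a * b) := by
    rw [ofLp_image_rect, volume_pi_pi, Fin.prod_univ_two]
    simp only [Matrix.cons_val_zero, Matrix.cons_val_one, Real.volume_Icc]
    rw [← ENNReal.ofReal_mul (by linarith)]
    ring_nf
  simpa [hvol] using volume_ofLp_image_le_hausdorffMeasure (rect a b)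

def proj12 (x : E3) : E2 := !₂[x 0, x 1]

theorem proj12_Xf (l₁ l₂ : ℝ) : LeftInverse proj12 (Xf l₁ l₂) := fun u => by
  ext i
  fin_cases i <;> rfl

theorem lipschitzWith_proj12 : LipschitzWith 1 proj12 := by
  refine LipschitzWith.of_dist_le_mul fun x y => ?_
  rw [NNReal.coe_one, one_mul, EuclideanSpace.dist_eq, EuclideanSpace.dist_eq, Fin.sum_univ_two,
    Fin.sum_univ_three]
  exact Real.sqrt_le_sqrt (le_add_of_nonneg_right (sq_nonneg _))

theorem continuous_Xf (l₁ l₂ : ℝ) : Continuous (Xf l₁ l₂) := by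
  refine (PiLp.continuous_toLp 2 _).comp (continuous_pi fun i => ?_)
  fin_cases i <;>
    simp only [Fin.zero_eta, Fin.mk_one, Fin.reduceFinMk, Matrix.cons_val_zero, Matrix.cons_val_one,
      Matrix.cons_val] <;>
    fun_prop

theorem inner_Xf_e1 (l₁ l₂ : ℝ) (u : E2) : ⟪Xf l₁ l₂ u, e1⟫ = u 0 := by
  simp [Xf, e1, mk3, PiLp.inner_apply, Fin.sum_univ_three]

theorem Xf_sub_smul_e1 (l₁ l₂ : ℝ) (u : E2) :
    Xf l₁ l₂ u - u 0 • e1 = mk3 0 (u 1) ((l₁ * u 0 ^ 2 + l₂ * u 1 ^ 2) / 2) := by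
  ext i
  fin_cases i <;> simp [Xf, e1, mk3]

theorem norm_mk3 (a b c : ℝ) : ‖mk3 a b c‖ = √(a ^ 2 + b ^ 2 + c ^ 2) := by
  simp [EuclideanSpace.norm_eq, Fin.sum_univ_three, mk3]

theorem abs_inner_nQ_e1_le (l₁ l₂ : ℝ) (u : E2) : |⟪nQ l₁ l₂ u, e1⟫| ≤ |l₁| * |u 0| := by
  set s := √(1 + l₁ ^ 2 * u 0 ^ 2 + l₂ ^ 2 * u 1 ^ 2)
  have hs : 1 ≤ s :=
    Real.one_le_sqrt.mpr (by nlinarith [sq_nonneg (l₁ * u 0), sq_nonneg (l₂ * u 1)])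
  have hinner : ⟪nQ l₁ l₂ u, e1⟫ = -(s⁻¹ * (l₁ * u 0)) := by
    simp [nQ, e1, mk3, s, PiLp.inner_apply, Fin.sum_univ_three]
  rw [hinner, abs_neg, abs_mul, abs_of_pos (by positivity), abs_mul]
  exact mul_le_of_le_one_left (by positivity) (inv_le_one_of_one_le₀ hs)

theorem Xf_image_rect_subset_tube {l₁ l₂ a b L : ℝ} (hb : 0 ≤ b) (haL : a ≤ L)
    (hQ : |l₁| * a ^ 2 + |l₂| * b ^ 2 ≤ 2 * b) :
    Xf l₁ l₂ '' rect a b ⊆ tube e1 0 0 (2 * b) L := by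
  rintro _ ⟨u, ⟨hu0, hu1⟩, rfl⟩
  have hsq0 : u 0 ^ 2 ≤ a ^ 2 := sq_le_sq' (neg_le_of_abs_le hu0) (le_of_abs_le hu0)
  have hsq1 : u 1 ^ 2 ≤ b ^ 2 := sq_le_sq' (neg_le_of_abs_le hu1) (le_of_abs_le hu1)
  have hheight : |(l₁ * u 0 ^ 2 + l₂ * u 1 ^ 2) / 2| ≤ b := by
    have : |l₁ * u 0 ^ 2 + l₂ * u 1 ^ 2| ≤ |l₁| * a ^ 2 + |l₂| * b ^ 2 :=
      calc |l₁ * u 0 ^ 2 + l₂ * u 1 ^ 2| ≤ |l₁| * u 0 ^ 2 + |l₂| * u 1 ^ 2 :=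
            (abs_add_le _ _).trans_eq (by rw [abs_mul, abs_mul, abs_sq, abs_sq])
        _ ≤ |l₁| * a ^ 2 + |l₂| * b ^ 2 := by gcongr
    rw [abs_div, abs_two]
    linarith
  refine ⟨?_, ?_⟩
  · rw [inner_Xf_e1, sub_zero, Xf_sub_smul_e1, norm_mk3, Real.sqrt_le_left (by positivity)]
    nlinarith [sq_abs ((l₁ * u 0 ^ 2 + l₂ * u 1 ^ 2) / 2),
      sq_le_sq' (neg_le_of_abs_le hheight) (le_of_abs_le hheight)]
  · rw [inner_Xf_e1, sub_zero]
    exact hu0.trans haL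

theorem Xf_image_rect_subset_strip_tube {l₁ l₂ δ ρ : ℝ} {U : Set E2} (hδ : 0 ≤ δ)
    (hδl : δ * (1 + |l₁| + |l₂|) ≤ 1) (hρ : 0 ≤ ρ) (hρ1 : ρ ≤ 1)
    (hU : rect (δ * √ρ) (δ * ρ) ⊆ U) :
    Xf l₁ l₂ '' rect (δ * √ρ) (δ * ρ) ⊆ Xf l₁ l₂ '' U ∩ tube e1 0 0 (2 * (δ * ρ)) 1 ∩
      Xf l₁ l₂ '' {u : E2 | u ∈ U ∧ |⟪nQ l₁ l₂ u, e1⟫| ≤ √ρ} := by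
  have hsρ : √ρ ≤ 1 := Real.sqrt_le_one.mpr hρ1
  have hδl₁ : δ * |l₁| ≤ 1 := by nlinarith [abs_nonneg l₂]
  have hδ1 : δ ≤ 1 := by nlinarith [abs_nonneg l₁, abs_nonneg l₂]
  have hρsq : ρ ^ 2 ≤ ρ := by nlinarith
  have hQ : |l₁| * (δ * √ρ) ^ 2 + |l₂| * (δ * ρ) ^ 2 ≤ 2 * (δ * ρ) :=
    calc |l₁| * (δ * √ρ) ^ 2 + |l₂| * (δ * ρ) ^ 2
        ≤ δ * ρ * (δ * (1 + |l₁| + |l₂|)) := by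
          rw [mul_pow, Real.sq_sqrt hρ]
          nlinarith [mul_le_mul_of_nonneg_left hρsq (mul_nonneg (abs_nonneg l₂) (sq_nonneg δ)),
            mul_nonneg (sq_nonneg δ) hρ]
      _ ≤ 2 * (δ * ρ) := by nlinarith [mul_nonneg hδ hρ]
  have hstrip : rect (δ * √ρ) (δ * ρ) ⊆ {u : E2 | u ∈ U ∧ |⟪nQ l₁ l₂ u, e1⟫| ≤ √ρ} :=
    fun u hu => ⟨hU hu, (abs_inner_nQ_e1_le l₁ l₂ u).trans <|
      calc |l₁| * |u 0| ≤ |l₁| * (δ * √ρ) := mul_le_mul_of_nonneg_left hu.1 (abs_nonneg l₁)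
        _ = δ * |l₁| * √ρ := by ring
        _ ≤ √ρ := mul_le_of_le_one_left (Real.sqrt_nonneg ρ) hδl₁⟩
  exact subset_inter (subset_inter (image_mono hU)
    (Xf_image_rect_subset_tube (by positivity) (mul_le_one₀ hδ1 (Real.sqrt_nonneg ρ) hsρ) hQ))
    (image_mono hstrip)

theorem ofReal_le_muQ_image_rect {l₁ l₂ a b c : ℝ} {U : Set E2} {χ : E3 → ℝ} (ha : 0 ≤ a)
    (hb : 0 ≤ b) (hU : rect a b ⊆ U) (hχ : ∀ u ∈ rect a b, c ≤ χ (Xf l₁ l₂ u)) :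
    ENNReal.ofReal (c * (4 * a * b)) ≤ muQ l₁ l₂ U χ (Xf l₁ l₂ '' rect a b) := by
  have hmeas : MeasurableSet (Xf l₁ l₂ '' rect a b) :=
    ((isCompact_rect ha hb).image (continuous_Xf l₁ l₂)).isClosed.measurableSet
  calc ENNReal.ofReal (c * (4 * a * b)) = ENNReal.ofReal c * ENNReal.ofReal (4 * a * b) :=
        ENNReal.ofReal_mul' (by positivity)
    _ ≤ ENNReal.ofReal c * μH[2] (Xf l₁ l₂ '' rect a b) := by
        gcongr
        exact (ofReal_le_hausdorffMeasure_rect ha b).trans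
          (hausdorffMeasure_le_image_of_leftInverse lipschitzWith_proj12 (proj12_Xf l₁ l₂)
            zero_le_two _)
    _ ≤ muQ l₁ l₂ U χ (Xf l₁ l₂ '' rect a b) :=
        ofReal_mul_le_withDensity_restrict _ hmeas (image_mono hU) (by
          rintro _ ⟨u, hu, rfl⟩
          exact hχ u hu)

theorem extreme_strip_mass_lower_general (l₁ l₂ r₀ cχ : ℝ)
    (hr₀ : 0 < r₀) (hcχ : 0 < cχ) :
    ∃ ρ₀ ∈ Set.Ioc (0 : ℝ) 1, ∃ c : ℝ, 0 < c ∧ ∃ C : ℝ, 1 ≤ C ∧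
      ∀ U : Set E2, IsOpen U → Metric.closedBall (0 : E2) r₀ ⊆ U →
      ∀ χ : E3 → ℝ, (∀ x, 0 ≤ χ x) → (∃ M : ℝ, ∀ x, χ x ≤ M) →
        (∀ u : E2, ‖u‖ ≤ r₀ → cχ ≤ χ (Xf l₁ l₂ u)) →
        ∀ ρ : ℝ, 0 < ρ → ρ ≤ ρ₀ →
          -- a tube of direction e₁, radius comparable to ρ, length comparable to 1,
          -- with axis through the origin
          ∃ r l : ℝ, c * ρ ≤ r ∧ r ≤ C * ρ ∧ c ≤ l ∧ l ≤ C ∧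
            ENNReal.ofReal (c * ρ ^ ((3 : ℝ) / 2)) ≤
              muQ l₁ l₂ U χ
                (Xf l₁ l₂ '' U ∩ tube e1 0 0 r l ∩
                  Xf l₁ l₂ '' {u : E2 | u ∈ U ∧ |⟪nQ l₁ l₂ u, e1⟫| ≤ Real.sqrt ρ}) := by
  set δ := min (r₀ / 2) (1 + |l₁| + |l₂|)⁻¹
  have hδ : 0 < δ := lt_min (half_pos hr₀) (by positivity)
  have hδr₀ : δ ≤ r₀ / 2 := min_le_left _ _
  have hδl : δ * (1 + |l₁| + |l₂|) ≤ 1 :=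
    (mul_le_mul_of_nonneg_right (min_le_right _ _) (by positivity)).trans_eq
      (inv_mul_cancel₀ (by positivity))
  have hδ1 : δ ≤ 1 := by nlinarith [abs_nonneg l₁, abs_nonneg l₂]
  refine ⟨1, ⟨one_pos, le_rfl⟩, min δ (4 * cχ * δ ^ 2), by positivity, 2, one_le_two, ?_⟩
  intro U _ hU χ _ _ hχ ρ hρ hρ1
  have hsρ : √ρ ≤ 1 := Real.sqrt_le_one.mpr hρ1
  have hball : rect (δ * √ρ) (δ * ρ) ⊆ closedBall 0 r₀ :=
    rect_subset_closedBall hr₀.le (by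
      rw [mul_pow, mul_pow, Real.sq_sqrt hρ.le]
      nlinarith [mul_le_mul_of_nonneg_left hρ1 (sq_nonneg δ), pow_le_one₀ hρ.le hρ1 (n := 2)])
  have hrpow : ρ ^ ((3 : ℝ) / 2) = √ρ * ρ := by
    rw [show (3 : ℝ) / 2 = 1 / 2 + 1 by norm_num, Real.rpow_add hρ, Real.rpow_one,
      ← Real.sqrt_eq_rpow]
  refine ⟨2 * (δ * ρ), 1, by nlinarith [min_le_left δ (4 * cχ * δ ^ 2)], by nlinarith,
    (min_le_left _ _).trans hδ1, one_le_two, ?_⟩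
  calc ENNReal.ofReal (min δ (4 * cχ * δ ^ 2) * ρ ^ ((3 : ℝ) / 2))
      ≤ ENNReal.ofReal (cχ * (4 * (δ * √ρ) * (δ * ρ))) := by
        refine ENNReal.ofReal_le_ofReal ?_
        rw [hrpow]
        nlinarith [min_le_right δ (4 * cχ * δ ^ 2), mul_nonneg (Real.sqrt_nonneg ρ) hρ.le]
    _ ≤ muQ l₁ l₂ U χ (Xf l₁ l₂ '' rect (δ * √ρ) (δ * ρ)) :=
        ofReal_le_muQ_image_rect (by positivity) (by positivity) (hball.trans hU)
          fun u hu => hχ u (mem_closedBall_zero_iff.mp (hball hu))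
    _ ≤ _ := measure_mono (Xf_image_rect_subset_strip_tube hδ.le hδl hρ.le hρ1 (hball.trans hU))

/-- extreme mass of a tangent tube (lower bound `ρ^{3/2}`). -/
theorem extreme_strip_mass_lower (l₁ l₂ r₀ cχ : ℝ) (hl : 0 < l₁ * l₂)
    (hr₀ : 0 < r₀) (hcχ : 0 < cχ) :
    ∃ ρ₀ ∈ Set.Ioc (0 : ℝ) 1, ∃ c : ℝ, 0 < c ∧ ∃ C : ℝ, 1 ≤ C ∧
      ∀ U : Set E2, IsOpen U → Metric.closedBall (0 : E2) r₀ ⊆ U →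
      ∀ χ : E3 → ℝ, (∀ x, 0 ≤ χ x) → (∃ M : ℝ, ∀ x, χ x ≤ M) →
        (∀ u : E2, ‖u‖ ≤ r₀ → cχ ≤ χ (Xf l₁ l₂ u)) →
        ∀ ρ : ℝ, 0 < ρ → ρ ≤ ρ₀ →
          -- a tube of direction e₁, radius comparable to ρ, length comparable to 1,
          -- with axis through the origin
          ∃ r l : ℝ, c * ρ ≤ r ∧ r ≤ C * ρ ∧ c ≤ l ∧ l ≤ C ∧
            ENNReal.ofReal (c * ρ ^ ((3 : ℝ) / 2)) ≤
              muQ l₁ l₂ U χ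
                (Xf l₁ l₂ '' U ∩ tube e1 0 0 r l ∩
                  Xf l₁ l₂ '' {u : E2 | u ∈ U ∧ |⟪nQ l₁ l₂ u, e1⟫| ≤ Real.sqrt ρ}) :=
  extreme_strip_mass_lower_general l₁ l₂ r₀ cχ hr₀ hcχ
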